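/- arXiv:1001.2504 — 3 statements merged into one kernel-verified Lean document; each statement's English description precedes it below -/
import Mathlib

section
/- In GL_{n+1}(F_2), with x_j = I + E_{j+1,j} and y_j = I + E_{j,j+1}, one has (x_j x_{j+1} y_j)^3 = I for all 1 ≤ j ≤ n-1. -/
open Matrix


/-- The transvection `x_{j+1} = I + E_{j+2,j+1}` (1-based: `x_j = I + E_{j+1,j}`). -/
def xM (n : ℕ) (j : Fin n) : Matrix (Fin (n + 1)) (Fin (n + 1)) (ZMod 2) :=
  1 + Matrix.single j.succ j.castSucc 1

/-- The transvection `y_{j+1} = I + E_{j+1,j+2}` (1-based: `y_j = I + E_{j,j+1}`). -/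
def yM (n : ℕ) (j : Fin n) : Matrix (Fin (n + 1)) (Fin (n + 1)) (ZMod 2) :=
  1 + Matrix.single j.castSucc j.succ 1

/-!
Write `E_{pq}` for `Matrix.single p q 1`. For distinct indices `a b c`, the product
`(1 + E_{ba}) (1 + E_{cb}) (1 + E_{ab})` equals `1 + S` with `S = E_{ab} + E_{ba} + E_{bb} + E_{cb}`.
The `(a, b)`-block of `S` is the Fibonacci matrix `F`, with `F² = F + 1`; its `c`-column vanishes and
its `c`-row copies its `a`-row. This gives `S³ = S² + S` over any ring, hence
`(1 + S)³ = 1 + 4 (S + S²)`, which is `1` as soon as `4 = 0`.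
-/

theorem one_add_pow_three_eq_one {R : Type*} [Ring R] {x : R} (hx : x ^ 3 = x ^ 2 + x)
    (h4 : (4 : R) = 0) : (1 + x) ^ 3 = 1 :=
  calc (1 + x) ^ 3 = 1 + 3 * x + 3 * x ^ 2 + x ^ 3 := by noncomm_ring
    _ = 1 + 4 * (x + x ^ 2) := by rw [hx]; noncomm_ring
    _ = 1 := by rw [h4, zero_mul, add_zero]

section

variable {m R : Type*} [Fintype m] [DecidableEq m] [Ring R] {a b c : m}

theorem one_add_single_mul_one_add_single_mul_one_add_single_eq (hab : a ≠ b) (hac : a ≠ c) :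
    (1 + single b a (1 : R)) * (1 + single c b 1) * (1 + single a b 1) =
      1 + (single a b 1 + single b a 1 + single b b 1 + single c b 1) := by
  simp only [mul_add, add_mul, mul_one, one_mul, single_mul_single_same, single_mul_single_of_ne,
    ne_eq, hab.symm, hac, not_false_eq_true, add_zero]
  abel

theorem pow_three_eq_pow_two_add_self (hab : a ≠ b) (hbc : b ≠ c) (hac : a ≠ c) :
    let S : Matrix m m R := single a b 1 + single b a 1 + single b b 1 + single c b 1
    S ^ 3 = S ^ 2 + S := by
  intro S
  simp only [S, pow_succ, pow_zero, one_mul, mul_add, add_mul, mul_one, single_mul_single_same,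
    single_mul_single_of_ne, ne_eq, hab, hab.symm, hbc, hac, not_false_eq_true,
    add_zero, zero_add]
  abel

theorem transvection_product_pow_three (hab : a ≠ b) (hbc : b ≠ c) (hac : a ≠ c)
    (h4 : (4 : R) = 0) :
    ((1 + single b a (1 : R)) * (1 + single c b 1) * (1 + single a b 1)) ^ 3 = 1 := by
  rw [one_add_single_mul_one_add_single_mul_one_add_single_eq hab hac]
  refine one_add_pow_three_eq_one (pow_three_eq_pow_two_add_self hab hbc hac) ?_
  rw [← diagonal_ofNat, h4, diagonal_zero]

end

theorem stmt6 (n : ℕ) (j k : Fin n) (hk : (k : ℕ) = (j : ℕ) + 1) :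
    (xM n j * xM n k * yM n j) ^ 3 = 1 := by
  have hkj : k.castSucc = j.succ := Fin.ext (by simp [hk])
  rw [xM, xM, yM, hkj]
  refine transvection_product_pow_three ?_ ?_ ?_ (by decide) <;>
    simp only [ne_eq, Fin.ext_iff, Fin.val_castSucc, Fin.val_succ, hk] <;> omega
end

section
/- Let λ = (λ_1,...,λ_l) and μ = (μ_1,...,μ_m) be compositions of n with μ_m ≤ λ_l. Then |P_{λ|μ}| = 2^{μ_m(λ_l - μ_m)} · |GL_{μ_m}(F_2)| · |P_{λ̃|μ̃}|, where λ̃ = (λ_1,...,λ_{l-1}, λ_l - μ_m) and μ̃ = (μ_1,...,μ_{m-1}), and P_{λ|μ} = P_λ ∩ (P_μ)^t is the intersection of the standard (upper-block-triangular) parabolic subgroup P_λ of GL_n(F_2) with the transpose of P_μ. -/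
/-!
Write `n = m + b` and index `Fin n` by `Fin m ⊕ Fin b`: the last `b` indices form the last block
of `μ` and lie inside the last block (of size `a ≥ b`) of `λ`. The `(P_μ)ᵗ` condition forces
`g = [[A, 0], [C, D]]`, and such a matrix is invertible iff `A` and `D` are. Then `g ∈ P_{λ|μ}`
iff `A ∈ P_{λ̃|μ̃}` and `C` vanishes on the columns outside the last block of `λ`, which leaves
`a - b` free columns; `D ∈ GL_b(F₂)` is arbitrary.
-/

open Matrix

/-- Index of the block (w.r.t. the composition `l`) containing row/column `i`. -/
def blockIdx (l : List ℕ) (i : ℕ) : ℕ :=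
  (List.range l.length).countP (fun k => (l.take (k + 1)).sum ≤ i)

/-- The submonoid of `GL n (F₂)` of matrices that are block upper triangular w.r.t. `l`
and block lower triangular w.r.t. `m`. -/
def paraPairM (n : ℕ) (l m : List ℕ) : Submonoid (GL (Fin n) (ZMod 2)) where
  carrier := {g | (∀ i j : Fin n, blockIdx l j < blockIdx l i →
      (g : Matrix (Fin n) (Fin n) (ZMod 2)) i j = 0) ∧
    (∀ i j : Fin n, blockIdx m i < blockIdx m j →
      (g : Matrix (Fin n) (Fin n) (ZMod 2)) i j = 0)}
  one_mem' := by
    constructor <;> intro i j h <;>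
    · have : i ≠ j := by rintro rfl; omega
      simp [Matrix.one_apply_ne this]
  mul_mem' := by
    rintro a b ⟨ha1, ha2⟩ ⟨hb1, hb2⟩
    constructor
    · intro i j h
      show ((a : Matrix (Fin n) (Fin n) (ZMod 2)) * b) i j = 0
      rw [Matrix.mul_apply]
      apply Finset.sum_eq_zero
      intro k _
      rcases lt_or_ge (blockIdx l k) (blockIdx l i) with hk | hk
      · rw [ha1 i k hk, zero_mul]
      · rw [hb1 k j (lt_of_lt_of_le h hk), mul_zero]
    · intro i j h
      show ((a : Matrix (Fin n) (Fin n) (ZMod 2)) * b) i j = 0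
      rw [Matrix.mul_apply]
      apply Finset.sum_eq_zero
      intro k _
      rcases lt_or_ge (blockIdx m i) (blockIdx m k) with hk | hk
      · rw [ha2 i k hk, zero_mul]
      · rw [hb2 k j (lt_of_le_of_lt hk h), mul_zero]

/-- `P_{λ|μ} = P_λ ∩ (P_μ)ᵗ` as a subgroup of `GL n (F₂)`. -/
def paraPair (n : ℕ) (l m : List ℕ) : Subgroup (GL (Fin n) (ZMod 2)) where
  toSubmonoid := paraPairM n l m
  inv_mem' := by
    intro g hg
    have hord : g ^ orderOf g = 1 := pow_orderOf_eq_one g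
    have hpos : 0 < orderOf g := orderOf_pos g
    have hinv : g⁻¹ = g ^ (orderOf g - 1) := by
      apply inv_eq_of_mul_eq_one_right
      rw [← pow_succ']
      have h1 : orderOf g - 1 + 1 = orderOf g := by omega
      rw [h1, hord]
    rw [hinv]
    exact Submonoid.pow_mem _ hg _

/-- The standard parabolic subgroup `P_λ` of `GL n (F₂)`. -/
def para (n : ℕ) (l : List ℕ) : Subgroup (GL (Fin n) (ZMod 2)) := paraPair n l []

/-- The stopover set of a composition. -/
def stopovers (l : List ℕ) : Set ℕ :=
  {s | ∃ t, 0 < t ∧ t < l.length ∧ (l.take t).sum = s}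

open OrderDual

theorem Matrix.fromBlocks_toBlocks_of_toBlocks₁₂_eq_zero {m k R : Type*} [Zero R]
    {W : Matrix (m ⊕ k) (m ⊕ k) R} (hW : W.toBlocks₁₂ = 0) :
    fromBlocks W.toBlocks₁₁ 0 W.toBlocks₂₁ W.toBlocks₂₂ = W := by
  rw [← hW, fromBlocks_toBlocks]

theorem Matrix.card_subtype_forall_col_eq_zero {ι κ R : Type*} [Finite ι] [Finite κ] [Zero R]
    (p : κ → Prop) :
    Nat.card {C : Matrix ι κ R // ∀ i j, p j → C i j = 0} =
      Nat.card R ^ (Nat.card ι * Nat.card {j // ¬ p j}) := by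
  classical
  let restrict :
      {C : Matrix ι κ R // ∀ i j, p j → C i j = 0} ≃ (ι → {j // ¬ p j} → R) :=
    { toFun C i j := C.1 i j
      invFun D := ⟨fun i j => if h : p j then 0 else D i ⟨j, h⟩, fun i j h => dif_pos h⟩
      left_inv C := by
        ext i j
        by_cases h : p j
        · simp [h, C.2 i j h]
        · simp [h]
      right_inv D := by
        ext i j
        simp [j.2] }
  rw [Nat.card_congr restrict, Nat.card_fun, Nat.card_fun, ← pow_mul, mul_comm]

theorem Fin.card_subtype_not_val_lt (m s : ℕ) :
    Nat.card {j : Fin m // ¬ (j : ℕ) < s} = m - s := by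
  rw [Nat.card_eq_fintype_card, Fintype.card_subtype_compl, Fintype.card_fin,
    Fintype.card_subtype, Fin.card_filter_val_lt]
  omega

namespace Matrix.GeneralLinearGroup

variable {m k R : Type*} [Fintype m] [Fintype k] [DecidableEq m] [DecidableEq k] [CommRing R]

def reindex {n : Type*} [Fintype n] [DecidableEq n] (e : m ≃ n) : GL m R ≃* GL n R :=
  Units.mapEquiv (reindexAlgEquiv R R e).toMulEquiv

@[simp]
theorem coe_reindex {n : Type*} [Fintype n] [DecidableEq n] (e : m ≃ n) (g : GL m R) :
    (reindex e g : Matrix n n R) = Matrix.reindex e e g :=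
  rfl

noncomputable def lowerBlockTriangularEquiv :
    {g : GL (m ⊕ k) R // (g : Matrix (m ⊕ k) (m ⊕ k) R).toBlocks₁₂ = 0} ≃
      GL m R × Matrix k m R × GL k R where
  toFun g :=
    have hunit := isUnit_fromBlocks_zero₁₂.mp
      ((fromBlocks_toBlocks_of_toBlocks₁₂_eq_zero g.2).symm ▸ g.1.isUnit)
    (hunit.1.unit, (g.1 : Matrix (m ⊕ k) (m ⊕ k) R).toBlocks₂₁, hunit.2.unit)
  invFun t :=
    ⟨(isUnit_fromBlocks_zero₁₂ (C := t.2.1).mpr ⟨t.1.isUnit, t.2.2.isUnit⟩).unit,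
      toBlocks_fromBlocks₁₂ _ _ _ _⟩
  left_inv g := Subtype.ext <| Units.ext <| fromBlocks_toBlocks_of_toBlocks₁₂_eq_zero g.2
  right_inv t := by ext <;> simp

end Matrix.GeneralLinearGroup

theorem blockIdx_le_length (l : List ℕ) (i : ℕ) : blockIdx l i ≤ l.length := by
  simpa [blockIdx] using List.countP_le_length (l := List.range l.length)
    (p := fun k => decide ((l.take (k + 1)).sum ≤ i))

theorem blockIdx_of_sum_le {l : List ℕ} {i : ℕ} (hi : l.sum ≤ i) :
    blockIdx l i = l.length := by
  simpa [blockIdx] using List.countP_eq_length.mpr fun k (_ : k ∈ List.range l.length) => by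
    simpa using ((List.take_sublist (k + 1) l).sum_le_sum (by simp)).trans hi

theorem blockIdx_lt_length_iff {l : List ℕ} {i : ℕ} :
    blockIdx l i < l.length ↔ i < l.sum := by
  refine ⟨fun h => ?_, fun hi => (blockIdx_le_length l i).lt_of_ne fun h => ?_⟩
  · by_contra! hi
    exact h.ne (blockIdx_of_sum_le hi)
  · replace h := List.countP_eq_length.mp (h.trans (List.length_range).symm)
    have hl : 0 < l.length := List.length_pos_iff.mpr (by rintro rfl; simp at hi)
    have := h (l.length - 1) (List.mem_range.mpr (by omega))
    simp only [Nat.sub_add_cancel hl, List.take_length, decide_eq_true_eq] at this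
    omega

theorem blockIdx_append_singleton {l : List ℕ} {x i : ℕ} (hi : i < l.sum + x) :
    blockIdx (l ++ [x]) i = blockIdx l i := by
  have hlast : ¬ ((l ++ [x]).take (l.length + 1)).sum ≤ i := by simpa using hi
  simp only [blockIdx, List.length_append, List.length_singleton, List.range_succ,
    List.countP_append, List.countP_singleton, hlast, decide_false]
  refine List.countP_congr fun k hk => ?_
  rw [List.take_append_of_le_length (by simpa using hk)]

theorem mem_paraPair_iff {n : ℕ} {l m : List ℕ} {g : GL (Fin n) (ZMod 2)} :
    g ∈ paraPair n l m ↔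
      (g : Matrix (Fin n) (Fin n) (ZMod 2)).BlockTriangular (blockIdx l ·) ∧
        (g : Matrix (Fin n) (Fin n) (ZMod 2)).BlockTriangular fun i => toDual (blockIdx m i) :=
  Iff.rfl

section Split

variable {m a b : ℕ} {L M : List ℕ}

section Blocks

variable {R : Type*} [Zero R] (W : Matrix (Fin m ⊕ Fin b) (Fin m ⊕ Fin b) R)

theorem blockTriangular_blockIdx_append_iff (hL : L.sum + a = m + b) (hba : b ≤ a) :
    W.BlockTriangular (fun i => blockIdx (L ++ [a]) (finSumFinEquiv i)) ↔
      W.toBlocks₁₁.BlockTriangular (blockIdx (L ++ [a - b]) ·) ∧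
        ∀ p (q : Fin m), (q : ℕ) < L.sum → W.toBlocks₂₁ p q = 0 := by
  have hleft (p : Fin m) : blockIdx (L ++ [a]) p = blockIdx (L ++ [a - b]) p := by
    rw [blockIdx_append_singleton (by omega), blockIdx_append_singleton (by omega)]
  have hright (q : Fin b) : blockIdx (L ++ [a]) (m + q) = L.length := by
    rw [blockIdx_append_singleton (by omega), blockIdx_of_sum_le (by omega)]
  have hle (p : Fin m) : ¬ L.length < blockIdx (L ++ [a - b]) p := by
    rw [blockIdx_append_singleton (by omega), not_lt]
    exact blockIdx_le_length L p
  have hlt (q : Fin m) : blockIdx (L ++ [a - b]) q < L.length ↔ (q : ℕ) < L.sum := by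
    rw [blockIdx_append_singleton (by omega), blockIdx_lt_length_iff]
  simp only [BlockTriangular, Sum.forall, finSumFinEquiv_apply_left, finSumFinEquiv_apply_right,
    Fin.val_castAdd, Fin.val_natAdd, hleft, hright, hle, hlt, lt_irrefl, toBlocks₁₁,
    toBlocks₂₁, of_apply, false_imp_iff, implies_true, and_true]

theorem blockTriangular_toDual_blockIdx_append_iff (hM : M.sum = m) :
    W.BlockTriangular (fun i => toDual (blockIdx (M ++ [b]) (finSumFinEquiv i))) ↔
      W.toBlocks₁₂ = 0 ∧ W.toBlocks₁₁.BlockTriangular fun i => toDual (blockIdx M i) := by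
  have hleft (p : Fin m) : blockIdx (M ++ [b]) p = blockIdx M p :=
    blockIdx_append_singleton (by omega)
  have hright (q : Fin b) : blockIdx (M ++ [b]) (m + q) = M.length := by
    rw [blockIdx_append_singleton (by omega), blockIdx_of_sum_le (by omega)]
  have hlt (p : Fin m) : blockIdx M p < M.length := blockIdx_lt_length_iff.mpr (by omega)
  have hle (p : Fin m) : ¬ M.length < blockIdx M p := (hlt p).le.not_gt
  simp only [BlockTriangular, Sum.forall, finSumFinEquiv_apply_left, finSumFinEquiv_apply_right,
    Fin.val_castAdd, Fin.val_natAdd, hleft, hright, toDual_lt_toDual, hle, hlt, lt_irrefl,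
    toBlocks₁₁, toBlocks₁₂, of_apply, false_imp_iff, true_imp_iff, implies_true, and_true,
    forall_and, ← Matrix.ext_iff, Matrix.zero_apply]
  exact and_comm

end Blocks

theorem reindex_finSumFinEquiv_mem_paraPair_iff (hL : L.sum + a = m + b) (hM : M.sum = m)
    (hba : b ≤ a) (g : GL (Fin m ⊕ Fin b) (ZMod 2)) :
    GeneralLinearGroup.reindex finSumFinEquiv g ∈ paraPair (m + b) (L ++ [a]) (M ++ [b]) ↔
      (g : Matrix (Fin m ⊕ Fin b) (Fin m ⊕ Fin b) (ZMod 2)).toBlocks₁₂ = 0 ∧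
        ((g : Matrix (Fin m ⊕ Fin b) (Fin m ⊕ Fin b) (ZMod 2)).toBlocks₁₁.BlockTriangular
            (blockIdx (L ++ [a - b]) ·) ∧
          (g : Matrix (Fin m ⊕ Fin b) (Fin m ⊕ Fin b) (ZMod 2)).toBlocks₁₁.BlockTriangular
            fun i => toDual (blockIdx M i)) ∧
        ∀ p (q : Fin m), (q : ℕ) < L.sum →
          (g : Matrix (Fin m ⊕ Fin b) (Fin m ⊕ Fin b) (ZMod 2)).toBlocks₂₁ p q = 0 := by
  rw [mem_paraPair_iff, GeneralLinearGroup.coe_reindex, blockTriangular_reindex_iff,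
    blockTriangular_reindex_iff]
  simp only [Function.comp_def]
  rw [blockTriangular_blockIdx_append_iff _ hL hba,
    blockTriangular_toDual_blockIdx_append_iff _ hM]
  tauto

open GeneralLinearGroup in
noncomputable def paraPairAppendEquiv (hL : L.sum + a = m + b) (hM : M.sum = m) (hba : b ≤ a) :
    paraPair m (L ++ [a - b]) M ×
        {C : Matrix (Fin b) (Fin m) (ZMod 2) // ∀ p (q : Fin m), (q : ℕ) < L.sum → C p q = 0} ×
        GL (Fin b) (ZMod 2) ≃
      paraPair (m + b) (L ++ [a]) (M ++ [b]) :=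
  (Equiv.prodCongr (Equiv.refl _) Equiv.prodSubtypeFstEquivSubtypeProd.symm).trans <|
  Equiv.subtypeProdEquivProd.symm.trans <|
  (lowerBlockTriangularEquiv.symm.subtypeEquiv fun _ => Iff.rfl).trans <|
  (Equiv.subtypeSubtypeEquivSubtypeInter _ _).trans <|
  (GeneralLinearGroup.reindex finSumFinEquiv).toEquiv.subtypeEquiv fun g =>
    (reindex_finSumFinEquiv_mem_paraPair_iff hL hM hba g).symm

theorem card_paraPair_append (hL : L.sum + a = m + b) (hM : M.sum = m) (hba : b ≤ a) :
    Nat.card (paraPair (m + b) (L ++ [a]) (M ++ [b])) =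
      2 ^ (b * (a - b)) * Nat.card (GL (Fin b) (ZMod 2)) *
        Nat.card (paraPair m (L ++ [a - b]) M) := by
  rw [← Nat.card_congr (paraPairAppendEquiv hL hM hba), Nat.card_prod, Nat.card_prod,
    Matrix.card_subtype_forall_col_eq_zero, Fin.card_subtype_not_val_lt, Nat.card_zmod,
    Nat.card_eq_fintype_card (α := Fin b), Fintype.card_fin, show m - L.sum = a - b by omega]
  ring

end Split

theorem stmt10_general (n a b : ℕ) (L M : List ℕ)
    (hLsum : (L ++ [a]).sum = n) (hMsum : (M ++ [b]).sum = n) (hba : b ≤ a) :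
    Nat.card (paraPair n (L ++ [a]) (M ++ [b])) =
      2 ^ (b * (a - b)) * Nat.card (GL (Fin b) (ZMod 2)) *
        Nat.card (paraPair (n - b) (L ++ [a - b]) M) := by
  simp only [List.sum_append, List.sum_singleton] at hLsum hMsum
  obtain ⟨m, rfl⟩ : ∃ m, n = m + b := ⟨M.sum, hMsum.symm⟩
  rw [Nat.add_sub_cancel, card_paraPair_append hLsum (by omega) hba]

theorem stmt10 (n a b : ℕ) (L M : List ℕ)
    (hL : ∀ x ∈ L ++ [a], 0 < x) (hM : ∀ x ∈ M ++ [b], 0 < x)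
    (hLsum : (L ++ [a]).sum = n) (hMsum : (M ++ [b]).sum = n) (hba : b ≤ a) :
    Nat.card (paraPair n (L ++ [a]) (M ++ [b])) =
      2 ^ (b * (a - b)) * Nat.card (GL (Fin b) (ZMod 2)) *
        Nat.card (paraPair (n - b) (L ++ [a - b]) M) :=
  stmt10_general n a b L M hLsum hMsum hba
end

section
/- The subgroup P_{λ|μ} of GL_{n+1}(F_2) is generated by the set of transvections {x_j = I + E_{j+1,j} : j ∉ s̄(λ)} ∪ {y_j = I + E_{j,j+1} : j ∉ s̄(μ)}, where s̄(λ) denotes the stopover set {λ_1, λ_1+λ_2, ..., λ_1+⋯+λ_{l-1}}. -/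
open Matrix

open Matrix

/-!
`P_{λ|μ}` consists of the invertible matrices supported on a transitive pattern: besides the
diagonal, entries `(i, j)` with `i > j` in one `λ`-block and with `i < j` in one `μ`-block.
Over `𝔽₂` such a matrix is reduced to the identity by Gaussian elimination that only multiplies
by transvections `I + E_{ab}` with `(a, b)` in the pattern: row `k` and column `k` are cleared
against the pivot, and a vanishing pivot is repaired by one row or column operation. (If neither
a nonzero entry `(i, k)` nor a nonzero entry `(k, j)`, with `i, j > k`, could be moved onto the
pivot inside the pattern, monotonicity of the block indices would force `i < j < i`.)
Finally `⁅I + E_{ac}, I + E_{cb}⁆ = I + E_{ab}`, so every transvection in the pattern is an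
iterated commutator of the `x_j` (inside a `λ`-block) or of the `y_j` (inside a `μ`-block).
-/

open scoped commutatorElement

theorem commutatorElement_mem {G : Type*} [Group G] {K : Subgroup G} {g h : G} (hg : g ∈ K)
    (hh : h ∈ K) : ⁅g, h⁆ ∈ K := by
  rw [commutatorElement_def]
  exact mul_mem (mul_mem (mul_mem hg hh) (inv_mem hg)) (inv_mem hh)

def transvectionGL {n R : Type*} [Fintype n] [DecidableEq n] [CommRing R] (i j : n) (hij : i ≠ j)
    (c : R) : GL n R :=
  ⟨transvection i j c, transvection i j (-c),
    by simp [transvection_mul_transvection_same (h := hij)],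
    by simp [transvection_mul_transvection_same (h := hij)]⟩

section Transvection

variable {n R : Type*} [Fintype n] [DecidableEq n] [CommRing R]

@[simp]
theorem coe_transvectionGL (i j : n) (hij : i ≠ j) (c : R) :
    (transvectionGL i j hij c : Matrix n n R) = transvection i j c := rfl

@[simp]
theorem coe_transvectionGL_inv (i j : n) (hij : i ≠ j) (c : R) :
    ((transvectionGL i j hij c)⁻¹ : GL n R) = (transvection i j (-c) : Matrix n n R) := rfl

theorem commutatorElement_transvectionGL {a b c : n} (hac : a ≠ c) (hcb : c ≠ b) (hab : a ≠ b)
    (x y : R) :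
    ⁅transvectionGL a c hac x, transvectionGL c b hcb y⁆ = transvectionGL a b hab (x * y) := by
  ext1
  simp only [commutatorElement_def, Units.val_mul, coe_transvectionGL_inv, coe_transvectionGL]
  simp only [transvection, mul_add, mul_one, add_mul, one_mul, single_mul_single_same,
    ← single_neg, mul_neg, neg_mul, ne_eq, hac.symm, hab.symm, hcb.symm, not_false_eq_true,
    single_mul_single_of_ne, add_zero, add_neg_cancel_right]
  abel

end Transvection

section Chain

variable {R : Type*} [CommRing R] {n : ℕ} {H : Subgroup (GL (Fin (n + 1)) R)}

theorem transvectionGL_mem_of_forall_succ_castSucc {a b : Fin (n + 1)} (hba : b < a)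
    (hstep : ∀ j : Fin n, b ≤ j.castSucc → j.succ ≤ a →
      transvectionGL j.succ j.castSucc j.castSucc_lt_succ.ne' (1 : R) ∈ H) :
    transvectionGL a b hba.ne' 1 ∈ H := by
  induction a using Fin.induction with
  | zero => exact absurd hba (Fin.not_lt_zero b)
  | succ j ih =>
    obtain rfl | hb := (Fin.le_castSucc_iff.mpr hba).eq_or_lt
    · exact hstep _ le_rfl le_rfl
    · rw [← mul_one (1 : R), ← commutatorElement_transvectionGL j.castSucc_lt_succ.ne' hb.ne']
      exact commutatorElement_mem (hstep j hb.le le_rfl)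
        (ih hb fun i hi hia => hstep i hi (hia.trans j.castSucc_lt_succ.le))

theorem transvectionGL_mem_of_forall_castSucc_succ {a b : Fin (n + 1)} (hab : a < b)
    (hstep : ∀ j : Fin n, a ≤ j.castSucc → j.succ ≤ b →
      transvectionGL j.castSucc j.succ j.castSucc_lt_succ.ne (1 : R) ∈ H) :
    transvectionGL a b hab.ne 1 ∈ H := by
  induction b using Fin.induction with
  | zero => exact absurd hab (Fin.not_lt_zero a)
  | succ j ih =>
    obtain rfl | ha := (Fin.le_castSucc_iff.mpr hab).eq_or_lt
    · exact hstep _ le_rfl le_rfl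
    · rw [← mul_one (1 : R), ← commutatorElement_transvectionGL ha.ne j.castSucc_lt_succ.ne]
      exact commutatorElement_mem
        (ih ha fun i hai hi => hstep i hai (hi.trans j.castSucc_lt_succ.le)) (hstep j ha.le le_rfl)

end Chain

section Support

def SupportedOn {n R : Type*} [Zero R] (A : n → n → Prop) (M : Matrix n n R) : Prop :=
  ∀ i j, M i j ≠ 0 → A i j

variable {n R : Type*} [DecidableEq n] [CommRing R] {A : n → n → Prop}

theorem supportedOn_transvection [Std.Refl A] {a b : n} (hab : A a b) (c : R) :
    SupportedOn A (transvection a b c) := by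
  intro i j hij
  obtain rfl | hne := eq_or_ne i j
  · exact refl_of A i
  obtain ⟨rfl, rfl, -⟩ : a = i ∧ b = j ∧ c ≠ 0 := by
    simpa [transvection, one_apply_ne hne, single_apply] using hij
  exact hab

theorem SupportedOn.mul_transvection [Fintype n] [IsTrans n A] {M : Matrix n n R}
    (hM : SupportedOn A M) {a b : n} (hab : A a b) (c : R) :
    SupportedOn A (M * transvection a b c) := by
  intro i j hij
  obtain rfl | hj := eq_or_ne j b
  · rw [mul_transvection_apply_same] at hij
    by_cases hia : M i a = 0
    · exact hM i j (by simpa [hia] using hij)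
    · exact trans_of A (hM i a hia) hab
  · exact hM i j (by rwa [mul_transvection_apply_of_ne (hb := hj)] at hij)

theorem SupportedOn.transvection_mul [Fintype n] [IsTrans n A] {M : Matrix n n R}
    (hM : SupportedOn A M) {a b : n} (hab : A a b) (c : R) :
    SupportedOn A (transvection a b c * M) := by
  intro i j hij
  obtain rfl | hi := eq_or_ne i a
  · rw [transvection_mul_apply_same] at hij
    by_cases hbj : M b j = 0
    · exact hM i j (by simpa [hbj] using hij)
    · exact trans_of A hab (hM b j hbj)
  · exact hM i j (by rwa [transvection_mul_apply_of_ne (ha := hi)] at hij)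

theorem exists_row_ne_zero_of_isUnit {n R : Type*} [Fintype n] [DecidableEq n] [CommRing R]
    [Nontrivial R] {M : Matrix n n R} (hM : IsUnit M) (i : n) : ∃ j, M i j ≠ 0 := by
  by_contra! h
  exact ((isUnit_iff_isUnit_det M).mp hM).ne_zero (det_eq_zero_of_row_eq_zero i h)

theorem exists_col_ne_zero_of_isUnit {n R : Type*} [Fintype n] [DecidableEq n] [CommRing R]
    [Nontrivial R] {M : Matrix n n R} (hM : IsUnit M) (j : n) : ∃ i, M i j ≠ 0 := by
  by_contra! h
  exact ((isUnit_iff_isUnit_det M).mp hM).ne_zero (det_eq_zero_of_column_eq_zero j h)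

end Support

section Elimination

variable {R : Type*} [CommRing R] {N : ℕ} {A : Fin N → Fin N → Prop}

def IsOneOnFirst (k : ℕ) (M : Matrix (Fin N) (Fin N) R) : Prop :=
  ∀ i j : Fin N, ((i : ℕ) < k ∨ (j : ℕ) < k) → M i j = (1 : Matrix (Fin N) (Fin N) R) i j

theorem IsOneOnFirst.mul_transvection {k : ℕ} {M : Matrix (Fin N) (Fin N) R}
    (hM : IsOneOnFirst k M) {a b : Fin N} (ha : k ≤ a) (hb : k ≤ b) (c : R) :
    IsOneOnFirst k (M * transvection a b c) := by
  intro i j hij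
  obtain rfl | hj := eq_or_ne j b
  · have hi : (i : ℕ) < k := hij.resolve_right (by omega)
    rw [mul_transvection_apply_same, hM i j (.inl hi), hM i a (.inl hi),
      one_apply_ne (by omega : i ≠ a), mul_zero, add_zero]
  · rw [mul_transvection_apply_of_ne _ _ _ _ hj]
    exact hM i j hij

theorem IsOneOnFirst.transvection_mul {k : ℕ} {M : Matrix (Fin N) (Fin N) R}
    (hM : IsOneOnFirst k M) {a b : Fin N} (ha : k ≤ a) (hb : k ≤ b) (c : R) :
    IsOneOnFirst k (transvection a b c * M) := by
  intro i j hij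
  obtain rfl | hi := eq_or_ne i a
  · have hj : (j : ℕ) < k := hij.resolve_left (by omega)
    rw [transvection_mul_apply_same, hM i j (.inr hj), hM b j (.inr hj),
      one_apply_ne (by omega : b ≠ j), mul_zero, add_zero]
  · rw [transvection_mul_apply_of_ne _ _ _ _ hi]
    exact hM i j hij

theorem IsOneOnFirst.succ {k : Fin N} {M : Matrix (Fin N) (Fin N) R} (hM : IsOneOnFirst k M)
    (hrow : ∀ j, M k j = (1 : Matrix (Fin N) (Fin N) R) k j)
    (hcol : ∀ i, M i k = (1 : Matrix (Fin N) (Fin N) R) i k) : IsOneOnFirst (k + 1) M := by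
  intro i j hij
  rcases hij with hi | hj
  · obtain hi | rfl := (Nat.lt_succ_iff.mp hi).lt_or_eq.imp_right Fin.ext
    · exact hM i j (.inl hi)
    · exact hrow j
  · obtain hj | rfl := (Nat.lt_succ_iff.mp hj).lt_or_eq.imp_right Fin.ext
    · exact hM i j (.inr hj)
    · exact hcol i

theorem IsOneOnFirst.eq_one {M : Matrix (Fin N) (Fin N) R} (hM : IsOneOnFirst N M) : M = 1 :=
  Matrix.ext fun i j => hM i j (.inl i.isLt)

theorem isOneOnFirst_zero (M : Matrix (Fin N) (Fin N) R) : IsOneOnFirst 0 M :=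
  fun i j h => by omega

section ZModTwo

theorem ZMod.eq_zero_or_eq_one_of_two : ∀ x : ZMod 2, x = 0 ∨ x = 1 := by decide

local notation "𝕄" => Matrix (Fin N) (Fin N) (ZMod 2)

def transvectionSubgroup (A : Fin N → Fin N → Prop) : Subgroup (GL (Fin N) (ZMod 2)) :=
  Subgroup.closure {g | ∃ (a b : Fin N) (hab : a ≠ b), A a b ∧ g = transvectionGL a b hab 1}

theorem transvectionGL_mem_transvectionSubgroup {a b : Fin N} (hab : a ≠ b) (h : A a b) :
    transvectionGL a b hab 1 ∈ transvectionSubgroup A :=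
  Subgroup.subset_closure ⟨a, b, hab, h, rfl⟩

variable [IsTrans (Fin N) A]

theorem mem_transvectionSubgroup_of_row_eq_one {k : Fin N}
    (hnext : ∀ g : GL (Fin N) (ZMod 2), SupportedOn A (g : 𝕄) → IsOneOnFirst (k + 1) (g : 𝕄) →
      g ∈ transvectionSubgroup A)
    {g : GL (Fin N) (ZMod 2)} (hg : SupportedOn A (g : 𝕄)) (hk : IsOneOnFirst k (g : 𝕄))
    (hrow : ∀ j, (g : 𝕄) k j = (1 : 𝕄) k j) : g ∈ transvectionSubgroup A := by
  suffices ∀ s : Finset (Fin N), ∀ g : GL (Fin N) (ZMod 2), SupportedOn A (g : 𝕄) →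
      IsOneOnFirst k (g : 𝕄) → (∀ j, (g : 𝕄) k j = (1 : 𝕄) k j) →
      (∀ i ∉ s, (g : 𝕄) i k = (1 : 𝕄) i k) → g ∈ transvectionSubgroup A from
    this Finset.univ g hg hk hrow (by simp)
  intro s
  induction s using Finset.induction_on with
  | empty =>
    exact fun g hg hk hrow hcol =>
      hnext g hg (hk.succ hrow fun i => hcol i (Finset.notMem_empty i))
  | insert i s _ ih =>
    intro g hg hk hrow hcol
    by_cases hgi : (g : 𝕄) i k = (1 : 𝕄) i k
    · refine ih g hg hk hrow fun i' hi' => ?_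
      obtain rfl | h := eq_or_ne i' i
      exacts [hgi, hcol i' (by simp [h, hi'])]
    have hik : i ≠ k := by rintro rfl; exact hgi (hrow i)
    have hgi1 : (g : 𝕄) i k = 1 :=
      (ZMod.eq_zero_or_eq_one_of_two _).resolve_left (by rwa [one_apply_ne hik] at hgi)
    have hki : (k : ℕ) ≤ i := by
      by_contra h
      exact hgi (hk i k (.inl (by omega)))
    have hA : A i k := hg i k (by rw [hgi1]; exact one_ne_zero)
    refine (Subgroup.mul_mem_cancel_left _
      (transvectionGL_mem_transvectionSubgroup hik hA)).mp (ih _ ?_ ?_ ?_ ?_)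
    · simpa using hg.transvection_mul hA 1
    · simpa using hk.transvection_mul hki le_rfl 1
    · intro j
      simpa [transvection_mul_apply_of_ne _ _ _ _ hik.symm] using hrow j
    · intro i' hi'
      obtain rfl | h := eq_or_ne i' i
      · rw [Units.val_mul, coe_transvectionGL, transvection_mul_apply_same, hgi1, hrow,
          one_apply_eq, one_apply_ne hik]
        decide
      · simpa [transvection_mul_apply_of_ne _ _ _ _ h] using hcol i' (by simp [h, hi'])

theorem mem_transvectionSubgroup_of_pivot_eq_one {k : Fin N}
    (hnext : ∀ g : GL (Fin N) (ZMod 2), SupportedOn A (g : 𝕄) → IsOneOnFirst (k + 1) (g : 𝕄) →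
      g ∈ transvectionSubgroup A)
    {g : GL (Fin N) (ZMod 2)} (hg : SupportedOn A (g : 𝕄)) (hk : IsOneOnFirst k (g : 𝕄))
    (hkk : (g : 𝕄) k k = 1) : g ∈ transvectionSubgroup A := by
  suffices ∀ s : Finset (Fin N), ∀ g : GL (Fin N) (ZMod 2), SupportedOn A (g : 𝕄) →
      IsOneOnFirst k (g : 𝕄) → (g : 𝕄) k k = 1 →
      (∀ j ∉ s, (g : 𝕄) k j = (1 : 𝕄) k j) → g ∈ transvectionSubgroup A from
    this Finset.univ g hg hk hkk (by simp)
  intro s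
  induction s using Finset.induction_on with
  | empty =>
    exact fun g hg hk _ hrow =>
      mem_transvectionSubgroup_of_row_eq_one hnext hg hk fun j => hrow j (Finset.notMem_empty j)
  | insert j s _ ih =>
    intro g hg hk hkk hrow
    by_cases hgj : (g : 𝕄) k j = (1 : 𝕄) k j
    · refine ih g hg hk hkk fun j' hj' => ?_
      obtain rfl | h := eq_or_ne j' j
      exacts [hgj, hrow j' (by simp [h, hj'])]
    have hkj : k ≠ j := by rintro rfl; exact hgj (by rw [hkk, one_apply_eq])
    have hgj1 : (g : 𝕄) k j = 1 :=
      (ZMod.eq_zero_or_eq_one_of_two _).resolve_left (by rwa [one_apply_ne hkj] at hgj)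
    have hkj' : (k : ℕ) ≤ j := by
      by_contra h
      exact hgj (hk k j (.inr (by omega)))
    have hA : A k j := hg k j (by rw [hgj1]; exact one_ne_zero)
    refine (Subgroup.mul_mem_cancel_right _
      (transvectionGL_mem_transvectionSubgroup hkj hA)).mp (ih _ ?_ ?_ ?_ ?_)
    · simpa using hg.mul_transvection hA 1
    · simpa using hk.mul_transvection le_rfl hkj' 1
    · simpa [mul_transvection_apply_of_ne _ _ _ _ hkj] using hkk
    · intro j' hj'
      obtain rfl | h := eq_or_ne j' j
      · rw [Units.val_mul, coe_transvectionGL, mul_transvection_apply_same, hgj1, hkk,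
          one_apply_ne hkj]
        decide
      · simpa [mul_transvection_apply_of_ne _ _ _ _ h] using hrow j' (by simp [h, hj'])

-- `hpivot`: a vanishing pivot at `(k, k)` can be repaired by a column or a row operation in the
-- pattern.
theorem mem_transvectionSubgroup_of_isOneOnFirst
    (hpivot : ∀ k i j : Fin N, k < i → k < j → A i k → A k j → A j k ∨ A k i) {k : Fin N}
    (hnext : ∀ g : GL (Fin N) (ZMod 2), SupportedOn A (g : 𝕄) → IsOneOnFirst (k + 1) (g : 𝕄) →
      g ∈ transvectionSubgroup A)
    {g : GL (Fin N) (ZMod 2)} (hg : SupportedOn A (g : 𝕄)) (hk : IsOneOnFirst k (g : 𝕄)) :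
    g ∈ transvectionSubgroup A := by
  by_cases hkk : (g : 𝕄) k k = 1
  · exact mem_transvectionSubgroup_of_pivot_eq_one hnext hg hk hkk
  have hkk0 : (g : 𝕄) k k = 0 := (ZMod.eq_zero_or_eq_one_of_two _).resolve_right hkk
  obtain ⟨j, hj⟩ := exists_row_ne_zero_of_isUnit g.isUnit k
  obtain ⟨i, hi⟩ := exists_col_ne_zero_of_isUnit g.isUnit k
  have hkj : k < j := by
    by_contra! h
    obtain h | rfl := h.lt_or_eq
    · exact hj (by rw [hk k j (.inr h), one_apply_ne (ne_of_gt h)])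
    · exact hj hkk0
  have hki : k < i := by
    by_contra! h
    obtain h | rfl := h.lt_or_eq
    · exact hi (by rw [hk i k (.inl h), one_apply_ne (ne_of_lt h)])
    · exact hi hkk0
  rcases hpivot k i j hki hkj (hg i k hi) (hg k j hj) with hA | hA
  · refine (Subgroup.mul_mem_cancel_right _
      (transvectionGL_mem_transvectionSubgroup hkj.ne' hA)).mp
      (mem_transvectionSubgroup_of_pivot_eq_one hnext ?_ ?_ ?_)
    · simpa using hg.mul_transvection hA 1
    · simpa using hk.mul_transvection hkj.le le_rfl 1
    · simp [hkk0, (ZMod.eq_zero_or_eq_one_of_two _).resolve_left hj]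
  · refine (Subgroup.mul_mem_cancel_left _
      (transvectionGL_mem_transvectionSubgroup hki.ne hA)).mp
      (mem_transvectionSubgroup_of_pivot_eq_one hnext ?_ ?_ ?_)
    · simpa using hg.transvection_mul hA 1
    · simpa using hk.transvection_mul le_rfl hki.le 1
    · simp [hkk0, (ZMod.eq_zero_or_eq_one_of_two _).resolve_left hi]

theorem mem_transvectionSubgroup_of_supportedOn
    (hpivot : ∀ k i j : Fin N, k < i → k < j → A i k → A k j → A j k ∨ A k i)
    {g : GL (Fin N) (ZMod 2)} (hg : SupportedOn A (g : 𝕄)) : g ∈ transvectionSubgroup A := by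
  have key : ∀ k ≤ N, ∀ g : GL (Fin N) (ZMod 2), SupportedOn A (g : 𝕄) → IsOneOnFirst k (g : 𝕄) →
      g ∈ transvectionSubgroup A := by
    refine fun k hk => Nat.decreasingInduction (fun k hk ih g =>
      mem_transvectionSubgroup_of_isOneOnFirst hpivot (k := ⟨k, hk⟩) ih) ?_ hk
    intro g _ hg
    rw [show g = 1 from Units.ext hg.eq_one]
    exact one_mem _
  exact key 0 (Nat.zero_le _) g hg (isOneOnFirst_zero _)

end ZModTwo

end Elimination

theorem List.countP_lt_countP {α : Type*} {p q : α → Bool} {l : List α} (hpq : ∀ x, p x → q x)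
    {a : α} (ha : a ∈ l) (hpa : ¬p a) (hqa : q a) : l.countP p < l.countP q := by
  rw [List.countP_eq_length_filter, List.countP_eq_length_filter]
  have hsub := l.monotone_filter_right hpq
  refine hsub.length_le.lt_of_ne fun h => hpa ?_
  have : a ∈ l.filter p := hsub.eq_of_length h ▸ List.mem_filter.2 ⟨ha, hqa⟩
  exact (List.mem_filter.1 this).2

section Parabolic

theorem blockIdx_mono (l : List ℕ) : Monotone (blockIdx l) := fun i i' h =>
  List.countP_mono_left fun k _ hk => by simp only [decide_eq_true_eq] at *; omega

theorem blockIdx_lt_blockIdx_succ {l : List ℕ} {j : ℕ} (h : j + 1 ∈ stopovers l) :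
    blockIdx l j < blockIdx l (j + 1) := by
  obtain ⟨t, ht0, htl, hsum⟩ := h
  have ht : t - 1 + 1 = t := by omega
  refine List.countP_lt_countP (fun k hk => ?_) (List.mem_range.2 (by omega : t - 1 < l.length))
    ?_ ?_ <;> simp only [decide_eq_true_eq, ht, hsum] at * <;> omega

theorem blockIdx_succ_le_blockIdx {l : List ℕ} {j : ℕ} (hj : j + 1 < l.sum)
    (h : j + 1 ∉ stopovers l) : blockIdx l (j + 1) ≤ blockIdx l j := by
  refine List.countP_mono_left fun k hk hkj => ?_
  simp only [decide_eq_true_eq, List.mem_range] at hk hkj ⊢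
  refine Nat.le_of_lt_succ (hkj.lt_of_ne fun heq => ?_)
  rcases Nat.lt_or_ge (k + 1) l.length with hlt | hge
  · exact h ⟨k + 1, k.succ_pos, hlt, heq⟩
  · rw [List.take_of_length_le hge] at heq
    omega

def blockRel (l m : List ℕ) {N : ℕ} (i j : Fin N) : Prop :=
  blockIdx l i ≤ blockIdx l j ∧ blockIdx m j ≤ blockIdx m i

variable {l m : List ℕ} {N : ℕ}

instance : Std.Refl (blockRel l m (N := N)) := ⟨fun _ => ⟨le_rfl, le_rfl⟩⟩

instance : IsTrans (Fin N) (blockRel l m) := ⟨fun _ _ _ h h' => ⟨h.1.trans h'.1, h'.2.trans h.2⟩⟩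

theorem blockRel_pivot (k i j : Fin N) (hki : k < i) (hkj : k < j) (hik : blockRel l m i k)
    (hkj' : blockRel l m k j) : blockRel l m j k ∨ blockRel l m k i := by
  have hli : blockIdx l k ≤ blockIdx l i := blockIdx_mono l hki.le
  have hmj : blockIdx m k ≤ blockIdx m j := blockIdx_mono m hkj.le
  refine or_iff_not_imp_left.2 fun hjk => ⟨hli, ?_⟩
  have hlj : blockIdx l k < blockIdx l j := by
    by_contra! h
    exact hjk ⟨h, hmj⟩
  have hij : (i : ℕ) < j := (blockIdx_mono l).reflect_lt (hik.1.trans_lt hlj)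
  by_contra! hmi
  have hji : (j : ℕ) < i := (blockIdx_mono m).reflect_lt (hkj'.2.trans_lt hmi)
  omega

theorem mem_paraPair_iff_s16 {g : GL (Fin N) (ZMod 2)} :
    g ∈ paraPair N l m ↔ SupportedOn (blockRel l m) (g : Matrix (Fin N) (Fin N) (ZMod 2)) := by
  simp only [SupportedOn, blockRel]
  constructor
  · rintro ⟨hl, hm⟩ i j hij
    exact ⟨not_lt.1 fun h => hij (hl i j h), not_lt.1 fun h => hij (hm i j h)⟩
  · intro h
    exact ⟨fun i j hij => by_contra fun h0 => (h i j h0).1.not_gt hij,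
      fun i j hij => by_contra fun h0 => (h i j h0).2.not_gt hij⟩

def paraGenerators (n : ℕ) (l m : List ℕ) : Set (GL (Fin (n + 1)) (ZMod 2)) :=
  {u | ∃ j : Fin n,
    (((j : ℕ) + 1) ∉ stopovers l ∧ (u : Matrix (Fin (n + 1)) (Fin (n + 1)) (ZMod 2)) = xM n j) ∨
    (((j : ℕ) + 1) ∉ stopovers m ∧ (u : Matrix (Fin (n + 1)) (Fin (n + 1)) (ZMod 2)) = yM n j)}

theorem paraGenerators_subset {n : ℕ} (hlsum : l.sum = n + 1) (hmsum : m.sum = n + 1) :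
    paraGenerators n l m ⊆ paraPair (n + 1) l m := by
  rintro u ⟨j, ⟨hj, hu⟩ | ⟨hj, hu⟩⟩ <;> rw [SetLike.mem_coe, mem_paraPair_iff_s16, hu]
  · refine supportedOn_transvection ⟨?_, blockIdx_mono m (Nat.le_succ j)⟩ 1
    exact blockIdx_succ_le_blockIdx (by omega) hj
  · refine supportedOn_transvection ⟨blockIdx_mono l (Nat.le_succ j), ?_⟩ 1
    exact blockIdx_succ_le_blockIdx (by omega) hj

theorem transvectionSubgroup_blockRel_le {n : ℕ} :
    transvectionSubgroup (blockRel l m) ≤ Subgroup.closure (paraGenerators n l m) := by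
  rw [transvectionSubgroup, Subgroup.closure_le]
  rintro _ ⟨a, b, hab, h, rfl⟩
  rcases hab.lt_or_gt with hab' | hba
  · refine transvectionGL_mem_of_forall_castSucc_succ hab' fun j haj hjb =>
      Subgroup.subset_closure ⟨j, .inr ⟨fun hs => ?_, rfl⟩⟩
    have h1 : blockIdx m j < blockIdx m (j + 1) := blockIdx_lt_blockIdx_succ hs
    have h2 : blockIdx m a ≤ blockIdx m j := blockIdx_mono m haj
    have h3 : blockIdx m (j + 1) ≤ blockIdx m b := blockIdx_mono m hjb
    exact (h.2.trans h2).not_gt (h1.trans_le h3)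
  · refine transvectionGL_mem_of_forall_succ_castSucc hba fun j hbj hja =>
      Subgroup.subset_closure ⟨j, .inl ⟨fun hs => ?_, rfl⟩⟩
    have h1 : blockIdx l j < blockIdx l (j + 1) := blockIdx_lt_blockIdx_succ hs
    have h2 : blockIdx l b ≤ blockIdx l j := blockIdx_mono l hbj
    have h3 : blockIdx l (j + 1) ≤ blockIdx l a := blockIdx_mono l hja
    exact (h.1.trans h2).not_gt (h1.trans_le h3)

end Parabolic

theorem stmt16_general (n : ℕ) (l m : List ℕ) (hlsum : l.sum = n + 1) (hmsum : m.sum = n + 1) :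
    paraPair (n + 1) l m = Subgroup.closure {u : GL (Fin (n + 1)) (ZMod 2) |
      ∃ j : Fin n,
        (((j : ℕ) + 1) ∉ stopovers l ∧
          (u : Matrix (Fin (n + 1)) (Fin (n + 1)) (ZMod 2)) = xM n j) ∨
        (((j : ℕ) + 1) ∉ stopovers m ∧
          (u : Matrix (Fin (n + 1)) (Fin (n + 1)) (ZMod 2)) = yM n j)} :=
  le_antisymm
    (fun _ hg => transvectionSubgroup_blockRel_le
      (mem_transvectionSubgroup_of_supportedOn blockRel_pivot (mem_paraPair_iff_s16.1 hg)))
    ((Subgroup.closure_le _).2 (paraGenerators_subset hlsum hmsum))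

theorem stmt16 (n : ℕ) (l m : List ℕ) (hl : ∀ x ∈ l, 0 < x) (hm : ∀ x ∈ m, 0 < x)
    (hlsum : l.sum = n + 1) (hmsum : m.sum = n + 1) :
    paraPair (n + 1) l m = Subgroup.closure {u : GL (Fin (n + 1)) (ZMod 2) |
      ∃ j : Fin n,
        (((j : ℕ) + 1) ∉ stopovers l ∧
          (u : Matrix (Fin (n + 1)) (Fin (n + 1)) (ZMod 2)) = xM n j) ∨
        (((j : ℕ) + 1) ∉ stopovers m ∧
          (u : Matrix (Fin (n + 1)) (Fin (n + 1)) (ZMod 2)) = yM n j)} :=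
  stmt16_general n l m hlsum hmsum
end
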